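/- (Theorem 1(ii), even r) Assume W > 0, 4I > zW, and r = 2k is even. Then H_i^0 attains its minimum over all ion configurations exactly at the configurations with n_x = k for every site x ∈ Λ, and the number of such minimizing configurations equals (C(2k,k))^{|Λ|}, where C(2k,k) = (2k)!/(k!k!). -/

import Mathlib

/-!
Since `(n_{x,σ} - 1/2)² = 1/4`, the on-site energy at `x` is `(n_x - r/2)²/2 - r/8`, and on a
`z`-regular graph `2 m_x m_y ≥ -(m_x² + m_y²)` bounds the bond energy below by
`-(zW/4) Σ_x m_x²`, where `m_x = n_x - r/2`. Hence
`H ≥ (I - zW/4) Σ_x (n_x - r/2)² - I r |Λ|/4`, with equality when every `n_x = r/2`.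
As `4I > zW`, the minimizers are exactly the configurations with `n_x = k` everywhere, and
these are counted by choosing independently at each site which `k` of the `2k` levels are
occupied.
-/

open Finset

/-- Occupation number (0 or 1) attached to a Boolean occupancy variable. -/
noncomputable def occ (b : Bool) : ℝ := if b then 1 else 0

/-- Total number of ions at site `x` (as a real number): `n_x = Σ_σ n_{x,σ}`. -/
noncomputable def nsite {V : Type*} {r : ℕ} (C : V → Fin r → Bool) (x : V) : ℝ :=
  ∑ σ : Fin r, occ (C x σ)

/-- Total number of ions at site `x` (as a natural number). -/
def nnat {V : Type*} {r : ℕ} (C : V → Fin r → Bool) (x : V) : ℕ :=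
  ∑ σ : Fin r, (if C x σ then 1 else 0)

/-- The classical Hamiltonian
`H_i^0(C) = 2I Σ_x Σ_{σ'<σ''} (n_{x,σ'} - 1/2)(n_{x,σ''} - 1/2)
          + (W/2) Σ_{⟨x,y⟩} (n_x - r/2)(n_y - r/2)`,
where the sum over edges `⟨x,y⟩` (each edge counted once) is written as half the
symmetric double sum over ordered adjacent pairs. -/
noncomputable def H0 {V : Type*} [Fintype V] (G : SimpleGraph V) [DecidableRel G.Adj]
    (r : ℕ) (I W : ℝ) (C : V → Fin r → Bool) : ℝ :=
  2 * I * ∑ x : V, ∑ p ∈ Finset.univ.filter (fun p : Fin r × Fin r => p.1 < p.2),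
      (occ (C x p.1) - 1 / 2) * (occ (C x p.2) - 1 / 2)
  + W / 2 * ((∑ x : V, ∑ y : V,
      (if G.Adj x y then (nsite C x - r / 2) * (nsite C y - r / 2) else 0)) / 2)

theorem sq_sum_eq_sum_sq_add_two_mul_sum_lt {ι R : Type*} [Fintype ι] [LinearOrder ι]
    [CommSemiring R] (a : ι → R) :
    (∑ i, a i) ^ 2 =
      ∑ i, a i ^ 2 + 2 * ∑ p ∈ univ.filter (fun p : ι × ι => p.1 < p.2), a p.1 * a p.2 := by
  have hswap : ∑ p ∈ univ.filter (fun p : ι × ι => p.2 < p.1), a p.1 * a p.2 =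
      ∑ p ∈ univ.filter (fun p : ι × ι => p.1 < p.2), a p.1 * a p.2 :=
    sum_nbij' Prod.swap Prod.swap (by simp) (by simp) (by simp) (by simp) (by simp [mul_comm])
  have hdiag : ∑ p ∈ univ.filter (fun p : ι × ι => p.1 = p.2), a p.1 * a p.2 = ∑ i, a i ^ 2 := by
    simp [sum_filter, Fintype.sum_prod_type, sq]
  calc (∑ i, a i) ^ 2 = ∑ p : ι × ι, a p.1 * a p.2 := by
        rw [sq, Fintype.sum_mul_sum, Fintype.sum_prod_type]
    _ = ∑ p : ι × ι, ((if p.1 < p.2 then a p.1 * a p.2 else 0) +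
          (if p.2 < p.1 then a p.1 * a p.2 else 0) + (if p.1 = p.2 then a p.1 * a p.2 else 0)) :=
        sum_congr rfl fun p _ => by
          rcases lt_trichotomy p.1 p.2 with h | h | h
          · simp [h, h.ne, h.not_gt]
          · simp [h]
          · simp [h, h.ne', h.not_gt]
    _ = _ := by
        simp only [sum_add_distrib, ← sum_filter, hswap, hdiag]
        ring

theorem SimpleGraph.IsRegularOfDegree.sum_ite_adj {V R : Type*} [Fintype V]
    [NonAssocSemiring R] {G : SimpleGraph V} [DecidableRel G.Adj] {z : ℕ}
    (hreg : G.IsRegularOfDegree z) (x : V) (c : R) :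
    ∑ y, (if G.Adj x y then c else 0) = z * c := by
  rw [← sum_filter, ← G.neighborFinset_eq_filter, sum_const, G.card_neighborFinset_eq_degree,
    hreg x, nsmul_eq_mul]

theorem SimpleGraph.IsRegularOfDegree.neg_mul_sum_sq_le_sum_adj_mul {V : Type*} [Fintype V]
    {G : SimpleGraph V} [DecidableRel G.Adj] {z : ℕ} (hreg : G.IsRegularOfDegree z)
    (f : V → ℝ) :
    -(z * ∑ x, f x ^ 2) ≤ ∑ x, ∑ y, if G.Adj x y then f x * f y else 0 := by
  have hleft : ∑ x, ∑ y, (if G.Adj x y then f x ^ 2 else 0) = z * ∑ x, f x ^ 2 := by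
    simp only [hreg.sum_ite_adj, mul_sum]
  have hright : ∑ x, ∑ y, (if G.Adj x y then f y ^ 2 else 0) = z * ∑ x, f x ^ 2 := by
    rw [sum_comm]
    simp only [G.adj_comm _ (_ : V), hreg.sum_ite_adj, mul_sum]
  have hsq : 0 ≤ ∑ x, ∑ y, if G.Adj x y then (f x + f y) ^ 2 else 0 :=
    sum_nonneg fun x _ => sum_nonneg fun y _ => by split_ifs <;> positivity
  have hexpand : ∑ x, ∑ y, (if G.Adj x y then (f x + f y) ^ 2 else 0) =
      ∑ x, ∑ y, (if G.Adj x y then f x ^ 2 else 0) +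
        ∑ x, ∑ y, (if G.Adj x y then f y ^ 2 else 0) +
        2 * ∑ x, ∑ y, (if G.Adj x y then f x * f y else 0) := by
    simp only [mul_sum, ← sum_add_distrib]
    exact sum_congr rfl fun x _ => sum_congr rfl fun y _ => by split_ifs <;> ring
  linarith

theorem card_subtype_card_filter_eq {ι : Type*} [Fintype ι] [DecidableEq ι] (k : ℕ) :
    Fintype.card {g : ι → Bool // #(univ.filter fun i => g i) = k} =
      (Fintype.card ι).choose k := by
  let e : {g : ι → Bool // #(univ.filter fun i => g i) = k} ≃ {s : Finset ι // #s = k} :=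
    { toFun := fun g => ⟨univ.filter fun i => g.1 i, g.2⟩
      invFun := fun s => ⟨fun i => decide (i ∈ s.1), by simpa using s.2⟩
      left_inv := fun g => Subtype.ext (funext fun i => by simp)
      right_inv := fun s => Subtype.ext (by ext i; simp) }
  rw [Fintype.card_congr e, Fintype.card_finset_len]

theorem setOf_forall_le_eq {α β : Type*} [Preorder β] {f : α → β} {S : Set α} {c : β}
    (hne : S.Nonempty) (hle : ∀ a, c ≤ f a) (hS : ∀ a, f a ≤ c ↔ a ∈ S) :
    {a | ∀ b, f a ≤ f b} = S := by
  obtain ⟨s, hs⟩ := hne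
  ext a
  exact ⟨fun ha => (hS a).1 ((ha s).trans ((hS s).2 hs)),
    fun ha b => ((hS a).2 ha).trans (hle b)⟩

section Hamiltonian

variable {V : Type*} {r : ℕ}

theorem nnat_eq_card_filter (C : V → Fin r → Bool) (x : V) :
    nnat C x = #(univ.filter fun σ => C x σ) :=
  (card_filter _ _).symm

theorem nsite_eq_nnat (C : V → Fin r → Bool) (x : V) : nsite C x = nnat C x := by
  unfold nsite nnat occ
  push_cast
  rfl

theorem nat_card_setOf_forall_nnat_eq [Fintype V] (k : ℕ) :
    Nat.card {C : V → Fin r → Bool | ∀ x, nnat C x = k} = r.choose k ^ Fintype.card V := by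
  let e : {C : V → Fin r → Bool | ∀ x, nnat C x = k} ≃
      (V → {g : Fin r → Bool // #(univ.filter fun σ => g σ) = k}) :=
    (Equiv.subtypeEquivRight (q := fun C => ∀ x, #(univ.filter fun σ => C x σ) = k)
      fun C => by simp only [Set.mem_ofPred_eq, nnat_eq_card_filter]).trans
      (Equiv.subtypePiEquivPi (p := fun (_ : V) (g : Fin r → Bool) =>
        #(univ.filter fun σ => g σ) = k))
  rw [Nat.card_congr e, Nat.card_fun, Nat.card_eq_fintype_card, card_subtype_card_filter_eq,
    Fintype.card_fin, Nat.card_eq_fintype_card]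

theorem sum_lt_occ_sub_half_mul (C : V → Fin r → Bool) (x : V) :
    ∑ p ∈ univ.filter (fun p : Fin r × Fin r => p.1 < p.2),
        (occ (C x p.1) - 1 / 2) * (occ (C x p.2) - 1 / 2) =
      (nsite C x - r / 2) ^ 2 / 2 - r / 8 := by
  have hsq : ∀ σ, (occ (C x σ) - 1 / 2) ^ 2 = 1 / 4 := fun σ => by
    unfold occ; cases C x σ <;> norm_num
  have hsum : ∑ σ, (occ (C x σ) - 1 / 2) = nsite C x - r / 2 := by
    rw [sum_sub_distrib, sum_const, card_univ, Fintype.card_fin, nsmul_eq_mul, nsite]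
    ring
  have h := sq_sum_eq_sum_sq_add_two_mul_sum_lt fun σ => occ (C x σ) - 1 / 2
  simp only [hsum, hsq, sum_const, card_univ, Fintype.card_fin, nsmul_eq_mul] at h
  linarith

variable [Fintype V] (G : SimpleGraph V) [DecidableRel G.Adj] (I W : ℝ)

theorem H0_eq (C : V → Fin r → Bool) :
    H0 G r I W C = I * ∑ x, (nsite C x - r / 2) ^ 2 - I * r * Fintype.card V / 4 +
      W / 4 * ∑ x, ∑ y, if G.Adj x y then (nsite C x - r / 2) * (nsite C y - r / 2) else 0 := by
  rw [H0, sum_congr rfl fun x _ => sum_lt_occ_sub_half_mul C x, sum_sub_distrib, ← sum_div,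
    sum_const, card_univ, nsmul_eq_mul]
  ring

theorem H0_of_forall_nsite_eq {C : V → Fin r → Bool} (hC : ∀ x, nsite C x = r / 2) :
    H0 G r I W C = -(I * r * Fintype.card V / 4) := by
  simp [H0_eq, hC]

variable {G} {z : ℕ}

theorem le_H0 (hreg : G.IsRegularOfDegree z) (hW : 0 < W) (C : V → Fin r → Bool) :
    -(I * r * Fintype.card V / 4) + (I - z * W / 4) * ∑ x, (nsite C x - r / 2) ^ 2 ≤
      H0 G r I W C := by
  have hbond := mul_le_mul_of_nonneg_left
    (hreg.neg_mul_sum_sq_le_sum_adj_mul fun x => nsite C x - r / 2) (by positivity : 0 ≤ W / 4)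
  rw [H0_eq]
  linarith

theorem neg_le_H0 (hreg : G.IsRegularOfDegree z) (hW : 0 < W) (hIW : (z : ℝ) * W < 4 * I)
    (C : V → Fin r → Bool) :
    -(I * r * Fintype.card V / 4) ≤ H0 G r I W C :=
  (le_H0 I W hreg hW C).trans' <| le_add_of_nonneg_right <|
    mul_nonneg (by linarith) (sum_nonneg fun _ _ => sq_nonneg _)

theorem H0_le_iff (hreg : G.IsRegularOfDegree z) (hW : 0 < W) (hIW : (z : ℝ) * W < 4 * I)
    (C : V → Fin r → Bool) :
    H0 G r I W C ≤ -(I * r * Fintype.card V / 4) ↔ ∀ x, nsite C x = r / 2 := by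
  refine ⟨fun hC x => ?_, fun hC => (H0_of_forall_nsite_eq G I W hC).le⟩
  have hnonneg : ∀ y ∈ univ, 0 ≤ (nsite C y - r / 2) ^ 2 := fun y _ => sq_nonneg _
  have hzero : ∑ y, (nsite C y - r / 2) ^ 2 = 0 := by
    have := le_H0 I W hreg hW C
    have hcoef : 0 < I - z * W / 4 := by linarith
    nlinarith [sum_nonneg hnonneg]
  exact sub_eq_zero.1 <| pow_eq_zero_iff two_ne_zero |>.1 <|
    (sum_eq_zero_iff_of_nonneg hnonneg).1 hzero x (mem_univ x)

end Hamiltonian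

theorem statement6_general
    {V : Type*} [Fintype V]
    (G : SimpleGraph V) [DecidableRel G.Adj]
    (z r : ℕ)
    (hreg : G.IsRegularOfDegree z)
    (I W : ℝ) (hW : 0 < W) (hIW : (z : ℝ) * W < 4 * I) (k : ℕ) (hrk : r = 2 * k) :
    {C : V → Fin r → Bool | ∀ C' : V → Fin r → Bool, H0 G r I W C ≤ H0 G r I W C'} =
      {C : V → Fin r → Bool | ∀ x : V, nnat C x = k} ∧
    Nat.card {C : V → Fin r → Bool |
        ∀ C' : V → Fin r → Bool, H0 G r I W C ≤ H0 G r I W C'} =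
      (Nat.choose (2 * k) k) ^ (Fintype.card V) := by
  have hcard : Nat.card {C : V → Fin r → Bool | ∀ x, nnat C x = k} =
      (2 * k).choose k ^ Fintype.card V := by
    rw [nat_card_setOf_forall_nnat_eq, hrk]
  have hne : {C : V → Fin r → Bool | ∀ x, nnat C x = k}.Nonempty := by
    have hpos : 0 < (2 * k).choose k ^ Fintype.card V := by
      have := Nat.choose_pos (by omega : k ≤ 2 * k)
      positivity
    exact Set.nonempty_coe_sort.1 (Nat.card_pos_iff.1 (hcard ▸ hpos)).1
  have hflat : ∀ C : V → Fin r → Bool, (∀ x, nsite C x = r / 2) ↔ ∀ x, nnat C x = k := by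
    intro C
    simp only [nsite_eq_nnat, hrk]
    push_cast
    simp only [mul_div_cancel_left₀ _ (two_ne_zero : (2 : ℝ) ≠ 0), Nat.cast_inj]
  have hset := setOf_forall_le_eq hne (neg_le_H0 I W hreg hW hIW)
    fun C => (H0_le_iff I W hreg hW hIW C).trans (hflat C)
  exact ⟨hset, hset ▸ hcard⟩

/-- **Theorem 1(ii), even `r`.** For `W > 0`, `4I > zW`, `r = 2k`, the
minimizers of `H_i^0` are exactly the configurations with `n_x = k` at every site, and
their number is `C(2k,k)^{|Λ|}`. -/
theorem statement6
    {V : Type*} [Fintype V] [DecidableEq V]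
    (G : SimpleGraph V) [DecidableRel G.Adj]
    (z r : ℕ) (hz : 2 ≤ z) (hr : 2 ≤ r)
    (hreg : G.IsRegularOfDegree z) (hconn : G.Connected)
    (Λe Λo : Finset V)
    (hcover : ∀ v : V, v ∈ Λe ∨ v ∈ Λo) (hdisj : Disjoint Λe Λo)
    (hbip : ∀ x y : V, G.Adj x y → (x ∈ Λe ∧ y ∈ Λo) ∨ (x ∈ Λo ∧ y ∈ Λe))
    (I W : ℝ) (hW : 0 < W) (hIW : (z : ℝ) * W < 4 * I) (k : ℕ) (hrk : r = 2 * k) :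
    {C : V → Fin r → Bool | ∀ C' : V → Fin r → Bool, H0 G r I W C ≤ H0 G r I W C'} =
      {C : V → Fin r → Bool | ∀ x : V, nnat C x = k} ∧
    Nat.card {C : V → Fin r → Bool |
        ∀ C' : V → Fin r → Bool, H0 G r I W C ≤ H0 G r I W C'} =
      (Nat.choose (2 * k) k) ^ (Fintype.card V) :=
  statement6_general G z r hreg I W hW hIW k hrk
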